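/- Let f ∈ ℂ[X₀,X₁] be homogeneous of degree d ≥ 4 and squarefree, and let F = Y^d − f(X₀,X₁) ∈ ℂ[Y,X₀,X₁]. If P ∈ ℂ[Y,X₀,X₁] is homogeneous of degree d−4 and satisfies u·P ∈ J_F for every homogeneous u ∈ ℂ[X₀,X₁] of degree d, then P = 0. -/

import Mathlib

/-!
Write `P = ∑ Yⁱ Pᵢ`. Below `Y`-degree `d - 1` the ideal `J_F` only sees `∂₀f, ∂₁f`, so the
hypothesis says `u Pᵢ ∈ J_f` for every form `u` of degree `d`. Since `f` is squarefree, Euler's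
identity makes `∂₀f, ∂₁f` coprime forms of degree `D = d - 1`; their only syzygy is then the Koszul
one, so `X₀g, X₁g ∈ J_f` implies `g ∈ J_f` as long as `deg g ≤ 2D - 3`. Descending from degree `d`
to `0` gives `Pᵢ ∈ J_f`, and `deg Pᵢ < D` forces `Pᵢ = 0`.
-/

open MvPolynomial

/-- The Jacobian ideal of a binary form `f ∈ ℂ[X₀,X₁] = S`: the ideal generated by the two
partial derivatives of `f`. -/
noncomputable def jacIdealS (f : MvPolynomial (Fin 2) ℂ) : Ideal (MvPolynomial (Fin 2) ℂ) :=
  Ideal.span {pderiv 0 f, pderiv 1 f}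

/-- The inclusion `S = ℂ[X₀,X₁] → T = ℂ[Y,X₀,X₁]`, where the variable `Y` of `T` is indexed
by `0` and `X₀, X₁` by `1, 2`. -/
noncomputable def embS : MvPolynomial (Fin 2) ℂ →ₐ[ℂ] MvPolynomial (Fin 3) ℂ :=
  rename Fin.succ

/-- `F = Y^d − f(X₀,X₁) ∈ T = ℂ[Y,X₀,X₁]`. -/
noncomputable def bigF (d : ℕ) (f : MvPolynomial (Fin 2) ℂ) : MvPolynomial (Fin 3) ℂ :=
  X 0 ^ d - embS f

/-- The Jacobian ideal `J_F ⊆ T` of `F = Y^d − f`: the ideal generated by the three partial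
derivatives `∂F/∂Y = d·Y^{d−1}`, `∂F/∂X₀ = −∂f/∂X₀`, `∂F/∂X₁ = −∂f/∂X₁`. -/
noncomputable def jacIdealT (d : ℕ) (f : MvPolynomial (Fin 2) ℂ) :
    Ideal (MvPolynomial (Fin 3) ℂ) :=
  Ideal.span {pderiv 0 (bigF d f), pderiv 1 (bigF d f), pderiv 2 (bigF d f)}

namespace MvPolynomial

section Graded

variable {σ R : Type*} [CommSemiring R] {u g : MvPolynomial σ R} {r n : ℕ}

attribute [local instance] gradedAlgebra

theorem homogeneousComponent_mul_of_le (hg : g.IsHomogeneous r) (h : r ≤ n) :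
    homogeneousComponent n (u * g) = homogeneousComponent (n - r) u * g := by
  rw [← decomposition.decompose'_apply, ← decomposition.decompose'_apply]
  exact DirectSum.coe_decompose_mul_of_right_mem_of_le (homogeneousSubmodule σ R) (a := u)
      ((mem_homogeneousSubmodule _ _).2 hg) h

theorem homogeneousComponent_mul_of_lt (hg : g.IsHomogeneous r) (h : n < r) :
    homogeneousComponent n (u * g) = 0 := by
  rw [← decomposition.decompose'_apply]
  exact DirectSum.coe_decompose_mul_of_right_mem_of_not_le (homogeneousSubmodule σ R) (a := u)
      ((mem_homogeneousSubmodule _ _).2 hg) h.not_ge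

theorem IsHomogeneous.eq_zero_of_dvd {w : MvPolynomial σ R} {m : ℕ} (hw : w.IsHomogeneous m)
    (hg : g.IsHomogeneous r) (hlt : m < r) (hdvd : g ∣ w) : w = 0 := by
  obtain ⟨t, rfl⟩ := hdvd
  rw [← homogeneousComponent_eq_self hw, mul_comm, homogeneousComponent_mul_of_lt hg hlt]

end Graded

section SpanPair

variable {σ R : Type*} [CommSemiring R] {f₀ f₁ h : MvPolynomial σ R} {D n : ℕ}

theorem IsHomogeneous.eq_homogeneousComponent_mul_add_of_mem_span_pair (hh : h.IsHomogeneous n)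
    (hmem : h ∈ Ideal.span {f₀, f₁}) :
    ∃ u v : MvPolynomial σ R,
      h = homogeneousComponent n (u * f₀) + homogeneousComponent n (v * f₁) := by
  obtain ⟨u, v, huv⟩ := Ideal.mem_span_pair.mp hmem
  exact ⟨u, v, by rw [← map_add, huv, homogeneousComponent_eq_self hh]⟩

theorem IsHomogeneous.eq_zero_of_mem_span_pair (hh : h.IsHomogeneous n)
    (hf₀ : f₀.IsHomogeneous D) (hf₁ : f₁.IsHomogeneous D) (hmem : h ∈ Ideal.span {f₀, f₁})
    (hlt : n < D) : h = 0 := by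
  obtain ⟨u, v, rfl⟩ := hh.eq_homogeneousComponent_mul_add_of_mem_span_pair hmem
  rw [homogeneousComponent_mul_of_lt hf₀ hlt, homogeneousComponent_mul_of_lt hf₁ hlt, add_zero]

theorem IsHomogeneous.exists_isHomogeneous_of_mem_span_pair (hh : h.IsHomogeneous n)
    (hf₀ : f₀.IsHomogeneous D) (hf₁ : f₁.IsHomogeneous D) (hmem : h ∈ Ideal.span {f₀, f₁})
    (hle : D ≤ n) :
    ∃ a b : MvPolynomial σ R, a.IsHomogeneous (n - D) ∧ b.IsHomogeneous (n - D) ∧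
      h = a * f₀ + b * f₁ := by
  obtain ⟨u, v, rfl⟩ := hh.eq_homogeneousComponent_mul_add_of_mem_span_pair hmem
  exact ⟨_, _, homogeneousComponent_isHomogeneous _ u, homogeneousComponent_isHomogeneous _ v,
    by rw [homogeneousComponent_mul_of_le hf₀ hle, homogeneousComponent_mul_of_le hf₁ hle]⟩

end SpanPair

section BinaryForms

variable {K : Type*} [Field K] {f₀ f₁ : MvPolynomial (Fin 2) K} {D : ℕ}

theorem X_zero_dvd_of_dvd_X_one_mul {a : MvPolynomial (Fin 2) K} (h : X 0 ∣ X 1 * a) :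
    X 0 ∣ a :=
  (X_prime.dvd_or_dvd h).resolve_left (by rw [X_dvd_X]; decide)

theorem mem_span_pair_of_X_mul_mem (hf₀ : f₀.IsHomogeneous D) (hf₁ : f₁.IsHomogeneous D)
    (hrel : IsRelPrime f₀ f₁) {g : MvPolynomial (Fin 2) K} {k : ℕ} (hg : g.IsHomogeneous k)
    (hk : k + 3 ≤ 2 * D) (h₀ : X 0 * g ∈ Ideal.span {f₀, f₁})
    (h₁ : X 1 * g ∈ Ideal.span {f₀, f₁}) : g ∈ Ideal.span {f₀, f₁} := by
  have hg₀ : (X 0 * g).IsHomogeneous (k + 1) := by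
    rw [add_comm]; exact (isHomogeneous_X K 0).mul hg
  have hg₁ : (X 1 * g).IsHomogeneous (k + 1) := by
    rw [add_comm]; exact (isHomogeneous_X K 1).mul hg
  obtain hlt | hle := lt_or_ge (k + 1) D
  · have := hg₀.eq_zero_of_mem_span_pair hf₀ hf₁ h₀ hlt
    rw [(mul_eq_zero.mp this).resolve_left (X_ne_zero 0)]
    exact Ideal.zero_mem _
  obtain ⟨a, b, ha, hb, hab⟩ := hg₀.exists_isHomogeneous_of_mem_span_pair hf₀ hf₁ h₀ hle
  obtain ⟨a', b', ha', hb', hab'⟩ := hg₁.exists_isHomogeneous_of_mem_span_pair hf₀ hf₁ h₁ hle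
  have syz : (X 1 * a - X 0 * a') * f₀ = (X 0 * b' - X 1 * b) * f₁ := by
    linear_combination X 0 * hab' - X 1 * hab
  -- coprimality gives `f₁ ∣ X₁a - X₀a'` and `f₀ ∣ X₀b' - X₁b`, but both have degree `< D`
  have hw : X 1 * a - X 0 * a' = 0 :=
    (((isHomogeneous_X K 1).mul ha).sub ((isHomogeneous_X K 0).mul ha')).eq_zero_of_dvd hf₁
      (by omega) (hrel.symm.dvd_of_dvd_mul_right ⟨_, syz.trans (mul_comm _ _)⟩)
  have hw' : X 0 * b' - X 1 * b = 0 :=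
    (((isHomogeneous_X K 0).mul hb').sub ((isHomogeneous_X K 1).mul hb)).eq_zero_of_dvd hf₀
      (by omega) (hrel.dvd_of_dvd_mul_right ⟨_, syz.symm.trans (mul_comm _ _)⟩)
  obtain ⟨α, rfl⟩ := X_zero_dvd_of_dvd_X_one_mul (a := a) ⟨a', by linear_combination hw⟩
  obtain ⟨β, rfl⟩ := X_zero_dvd_of_dvd_X_one_mul (a := b) ⟨b', by linear_combination -hw'⟩
  have : g = α * f₀ + β * f₁ :=
    mul_left_cancel₀ (X_ne_zero 0) (by linear_combination hab)
  exact Ideal.mem_span_pair.mpr ⟨α, β, this.symm⟩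

theorem eq_zero_of_forall_mul_mem_span_pair (hf₀ : f₀.IsHomogeneous D)
    (hf₁ : f₁.IsHomogeneous D) (hrel : IsRelPrime f₀ f₁) {h : MvPolynomial (Fin 2) K} {e k : ℕ}
    (hh : h.IsHomogeneous e) (he : e < D) (hk : e + k + 2 ≤ 2 * D)
    (H : ∀ u : MvPolynomial (Fin 2) K, u.IsHomogeneous k → u * h ∈ Ideal.span {f₀, f₁}) :
    h = 0 := by
  induction k with
  | zero =>
    exact hh.eq_zero_of_mem_span_pair hf₀ hf₁ (by simpa using H 1 (isHomogeneous_one _ _)) he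
  | succ k ih =>
    refine ih (by omega) fun u hu => mem_span_pair_of_X_mul_mem hf₀ hf₁ hrel (hu.mul hh)
      (by omega) ?_ ?_
    · convert H _ (hu.mul (isHomogeneous_X K 0)) using 1; ring
    · convert H _ (hu.mul (isHomogeneous_X K 1)) using 1; ring

end BinaryForms

section PartialDerivatives

variable {σ : Type*}

theorem totalDegree_pderiv_lt {R : Type*} [CommSemiring R] {q : MvPolynomial σ R} {i : σ}
    (hq : pderiv i q ≠ 0) : (pderiv i q).totalDegree < q.totalDegree := by
  have key : ∀ m ∈ (pderiv i q).support, m.degree < q.totalDegree := fun m hm => by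
    rw [mem_support_iff, coeff_pderiv] at hm
    have := le_totalDegree (mem_support_iff.2 (left_ne_zero_of_mul hm))
    change Finsupp.degree (m + Finsupp.single i 1) ≤ _ at this
    rw [map_add, Finsupp.degree_single] at this
    omega
  obtain ⟨m, hm⟩ := support_nonempty.2 hq
  exact (Finset.sup_lt_iff (key m hm).bot_lt).2 key

variable {R : Type*} [CommRing R] [IsDomain R]

theorem pderiv_eq_zero_of_dvd {q : MvPolynomial σ R} {i : σ} (h : q ∣ pderiv i q) :
    pderiv i q = 0 := by
  by_contra hne
  exact (totalDegree_le_of_dvd_of_isDomain h hne).not_gt (totalDegree_pderiv_lt hne)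

theorem eq_C_of_forall_pderiv_eq_zero [CharZero R] {q : MvPolynomial σ R}
    (h : ∀ i, pderiv i q = 0) : q = C (coeff 0 q) := by
  classical
  ext m
  rw [coeff_C]
  split_ifs with hm
  · rw [hm]
  obtain ⟨i, hi⟩ := Finsupp.ne_iff.1 (Ne.symm hm)
  have hle : Finsupp.single i 1 ≤ m := Finsupp.single_le_iff.2 (Nat.one_le_iff_ne_zero.2 hi)
  have := coeff_pderiv (i := i) q (m - Finsupp.single i 1)
  rw [h i, coeff_zero, tsub_add_cancel_of_le hle] at this
  exact (mul_eq_zero.1 this.symm).resolve_right (Nat.cast_add_one_ne_zero _)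

variable {K : Type*} [Field K] [CharZero K] [Fintype σ] {f p : MvPolynomial σ K} {d : ℕ}

theorem IsHomogeneous.dvd_of_forall_dvd_pderiv (hf : f.IsHomogeneous d) (hd : d ≠ 0)
    (hp : ∀ i, p ∣ pderiv i f) : p ∣ f := by
  have hunit : IsUnit (d : MvPolynomial σ K) := by
    rw [← map_natCast C]; exact (isUnit_iff_ne_zero.2 (Nat.cast_ne_zero.2 hd)).map C
  rw [← hunit.dvd_mul_left, ← nsmul_eq_mul, ← hf.sum_X_mul_pderiv]
  exact Finset.dvd_sum fun i _ => (hp i).mul_left _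

-- A prime `q` with `f = q g`, `q ∤ g` divides `∂ᵢf = ∂ᵢq g + q ∂ᵢg` only if `q ∣ ∂ᵢq`, i.e. if
-- `∂ᵢq = 0`; so a common prime factor of all `∂ᵢf` would be a constant.
theorem IsHomogeneous.isUnit_of_forall_dvd_pderiv (hf : f.IsHomogeneous d) (hd : d ≠ 0)
    (hsf : Squarefree f) (hp : ∀ i, p ∣ pderiv i f) : IsUnit p := by
  by_contra hpu
  have hp0 : p ≠ 0 := by
    rintro rfl
    exact hsf.ne_zero (zero_dvd_iff.1 (hf.dvd_of_forall_dvd_pderiv hd hp))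
  obtain ⟨q, hq, hqp⟩ := WfDvdMonoid.exists_irreducible_factor hpu hp0
  replace hq := hq.prime
  obtain ⟨g, rfl⟩ := hf.dvd_of_forall_dvd_pderiv hd fun i => hqp.trans (hp i)
  have hqg : ¬ q ∣ g := fun ⟨g', hg'⟩ => hq.not_isUnit (hsf q ⟨g', by rw [hg', mul_assoc]⟩)
  have hder : ∀ i, pderiv i q = 0 := fun i => by
    refine pderiv_eq_zero_of_dvd ((hq.dvd_or_dvd ?_).resolve_right hqg)
    have := hqp.trans (hp i)
    rwa [pderiv_mul, dvd_add_left (dvd_mul_right q _)] at this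
  have hc : coeff 0 q ≠ 0 := fun hc =>
    hq.ne_zero (by rw [eq_C_of_forall_pderiv_eq_zero hder, hc, C_0])
  exact hq.not_isUnit (eq_C_of_forall_pderiv_eq_zero hder ▸ (isUnit_iff_ne_zero.2 hc).map C)

end PartialDerivatives

end MvPolynomial

theorem Polynomial.coeff_mem_of_mem_map_C_sup_span_X_pow {R : Type*} [CommRing R]
    {I : Ideal R} {p : Polynomial R} {n i : ℕ}
    (hp : p ∈ I.map Polynomial.C ⊔ Ideal.span {Polynomial.X ^ n}) (hi : i < n) :
    p.coeff i ∈ I := by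
  obtain ⟨a, ha, b, hb, rfl⟩ := Submodule.mem_sup.1 hp
  obtain ⟨c, rfl⟩ := Ideal.mem_span_singleton.1 hb
  rw [Polynomial.coeff_add, Polynomial.coeff_X_pow_mul', if_neg (by omega), add_zero]
  exact Ideal.mem_map_C_iff.1 ha i

theorem finSuccEquiv_embS (q : MvPolynomial (Fin 2) ℂ) :
    finSuccEquiv ℂ 2 (embS q) = Polynomial.C q := by
  have : (finSuccEquiv ℂ 2).toAlgHom.comp embS = Polynomial.CAlgHom :=
    algHom_ext fun i => by simp [embS, finSuccEquiv_X_succ]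
  exact DFunLike.congr_fun this q

theorem pderiv_zero_bigF (d : ℕ) (f : MvPolynomial (Fin 2) ℂ) :
    pderiv 0 (bigF d f) = (d : MvPolynomial (Fin 3) ℂ) * X 0 ^ (d - 1) := by
  have : pderiv 0 (embS f) = 0 := pderiv_eq_zero_of_notMem_vars fun h => by
    obtain ⟨i, -, hi⟩ := mem_vars_rename _ _ h
    exact Fin.succ_ne_zero i hi
  rw [bigF, map_sub, this, sub_zero, pderiv_pow, pderiv_X_self, mul_one]

theorem pderiv_succ_bigF (d : ℕ) (f : MvPolynomial (Fin 2) ℂ) (i : Fin 2) :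
    pderiv i.succ (bigF d f) = -embS (pderiv i f) := by
  rw [bigF, map_sub, pderiv_pow, pderiv_X_of_ne (Fin.succ_ne_zero i).symm, mul_zero, zero_sub,
    embS, pderiv_rename (Fin.succ_injective 2)]

theorem jacIdealT_le_comap_finSuccEquiv (d : ℕ) (f : MvPolynomial (Fin 2) ℂ) :
    jacIdealT d f ≤ ((jacIdealS f).map Polynomial.C ⊔ Ideal.span {Polynomial.X ^ (d - 1)}).comap
      (finSuccEquiv ℂ 2) := by
  have hC (i : Fin 2) : finSuccEquiv ℂ 2 (pderiv i.succ (bigF d f)) ∈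
      (jacIdealS f).map Polynomial.C ⊔ Ideal.span {Polynomial.X ^ (d - 1)} := by
    rw [pderiv_succ_bigF, map_neg, finSuccEquiv_embS]
    refine Ideal.mem_sup_left ((Ideal.neg_mem_iff _).2
      (Ideal.mem_map_of_mem _ (Ideal.subset_span ?_)))
    fin_cases i <;> simp
  rw [jacIdealT, Ideal.span_le]
  rintro _ (rfl | rfl | rfl)
  · rw [SetLike.mem_coe, Ideal.mem_comap, pderiv_zero_bigF, map_mul, map_pow, map_natCast,
      finSuccEquiv_X_zero]
    exact Ideal.mem_sup_right (Ideal.mul_mem_left _ _ (Ideal.subset_span rfl))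
  · exact hC 0
  · exact hC 1

theorem coeff_finSuccEquiv_mem_jacIdealS {d : ℕ} {f : MvPolynomial (Fin 2) ℂ}
    {Q : MvPolynomial (Fin 3) ℂ} (hQ : Q ∈ jacIdealT d f) {i : ℕ} (hi : i < d - 1) :
    (finSuccEquiv ℂ 2 Q).coeff i ∈ jacIdealS f :=
  Polynomial.coeff_mem_of_mem_map_C_sup_span_X_pow (jacIdealT_le_comap_finSuccEquiv d f hQ) hi

/-- Let `f ∈ ℂ[X₀,X₁]` be homogeneous of degree `d ≥ 4` and squarefree, and
`F = Y^d − f(X₀,X₁)`.  If `P ∈ ℂ[Y,X₀,X₁]` is homogeneous of degree `d−4` and `u·P ∈ J_F`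
for every homogeneous `u ∈ ℂ[X₀,X₁]` of degree `d`, then `P = 0`. -/
theorem stmt12 (d : ℕ) (hd : 4 ≤ d) (f : MvPolynomial (Fin 2) ℂ)
    (hf : f.IsHomogeneous d) (hsf : Squarefree f)
    (P : MvPolynomial (Fin 3) ℂ) (hP : P.IsHomogeneous (d - 4))
    (hann : ∀ u : MvPolynomial (Fin 2) ℂ, u.IsHomogeneous d → embS u * P ∈ jacIdealT d f) :
    P = 0 := by
  have hrel : IsRelPrime (pderiv 0 f) (pderiv 1 f) := fun p h₀ h₁ =>
    hf.isUnit_of_forall_dvd_pderiv (by omega) hsf (Fin.forall_fin_two.2 ⟨h₀, h₁⟩)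
  suffices hcoeff : ∀ i, (finSuccEquiv ℂ 2 P).coeff i = 0 from
    (finSuccEquiv ℂ 2).injective (by ext i : 1; simpa using hcoeff i)
  intro i
  obtain hi | hi := lt_or_ge (d - 4) i
  · by_contra hne
    have := totalDegree_coeff_finSuccEquiv_add_le P i hne
    have := hP.totalDegree_le
    omega
  refine eq_zero_of_forall_mul_mem_span_pair hf.pderiv hf.pderiv hrel
    (hP.finSuccEquiv_coeff_isHomogeneous i (d - 4 - i) (by omega)) (k := d) (by omega) (by omega)
    fun u hu => ?_
  simpa [finSuccEquiv_embS, jacIdealS] using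
    coeff_finSuccEquiv_mem_jacIdealS (hann u hu) (i := i) (by omega)
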